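/- arXiv:2010.08083 — 4 statements merged into one kernel-verified Lean document; each statement's English description precedes it below -/
import Mathlib

section
/- Let H→ be an acyclic orientation of a simple graph H with source set S, let S_p ⊊ S, and let T be a partial DAG tree decomposition with respect to S_p of width one. Let s ∈ S with s ∉ S_p, and suppose d ∈ S_p is an S_p-cover of s. Then the tree T′ obtained from T by adding the singleton bag {s} as a new leaf adjacent to the node {d} of T is a partial DAG tree decomposition with respect to S_p ∪ {s}, and T′ has width one. -/
/-!
The new node has a single neighbour, so the extended graph is again a tree, and its paths are
the paths of the old tree, possibly preceded by the new edge. Only paths starting at the new leaf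
need an argument: if `j` lies on the old path from `i₀` to `k`, a vertex reachable from `s` and
from `bag k` is reachable from `bag i₀` because `d` covers `s`, and hence from `bag j` because
the old decomposition handles the path from `i₀` to `k`.
-/

/-- An acyclic orientation of a simple graph `H`: a relation `D` directing every
edge of `H` (and nothing else) with no directed cycle. -/
structure GraphOrientation {V : Type} (H : SimpleGraph V) : Type where
  D : V → V → Prop
  adj_of_rel : ∀ u v, D u v → H.Adj u v
  rel_of_adj : ∀ u v, H.Adj u v → D u v ∨ D v u
  acyclic : ∀ v, ¬ Relation.TransGen D v v

namespace GraphOrientation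

variable {V : Type} {H : SimpleGraph V}

/-- The set of sources of an acyclic orientation: vertices with no incoming edge. -/
def sources (O : GraphOrientation H) : Set V := {s | ∀ u, ¬ O.D u s}

/-- The set of vertices reachable from `s` by a directed path (including `s`). -/
def reach (O : GraphOrientation H) (s : V) : Set V := {v | Relation.ReflTransGen O.D s v}

/-- The set of vertices reachable from some vertex of `B`. -/
def reachSet (O : GraphOrientation H) (B : Set V) : Set V := ⋃ s ∈ B, O.reach s

end GraphOrientation

/-- `tree` together with the bag assignment `bag` is a (partial) DAG tree
decomposition of the orientation `O` with respect to the vertex set `Sp`: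
a finite tree whose bags are subsets of `Sp` whose union is `Sp`, such that
whenever a node `j` lies on the (unique) path between nodes `i` and `k`,
`reach(bag i) ∩ reach(bag k) ⊆ reach(bag j)`.
Taking `Sp = O.sources` gives the notion of a DAG tree decomposition of `O`. -/
def IsPDTD {V : Type} {H : SimpleGraph V} (O : GraphOrientation H) (Sp : Set V)
    {ι : Type} (tree : SimpleGraph ι) (bag : ι → Set V) : Prop :=
  Finite ι ∧ tree.IsTree ∧ (∀ i, bag i ⊆ Sp) ∧ (⋃ i, bag i) = Sp ∧
    ∀ (i j k : ι) (p : tree.Walk i k), p.IsPath → j ∈ p.support →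
      O.reachSet (bag i) ∩ O.reachSet (bag k) ⊆ O.reachSet (bag j)

/-- The width of a bag assignment: the maximum bag size. -/
noncomputable def bagWidth {V ι : Type} (bag : ι → Set V) : ℕ := ⨆ i, (bag i).ncard

/-- A width-one (partial) DAG tree decomposition: every bag is a singleton, and
distinct nodes carry distinct bags (so nodes may be identified with sources). -/
def IsWidthOnePDTD {V : Type} {H : SimpleGraph V} (O : GraphOrientation H) (Sp : Set V)
    {ι : Type} (tree : SimpleGraph ι) (bag : ι → Set V) : Prop :=
  IsPDTD O Sp tree bag ∧ Function.Injective bag ∧ ∀ i, ∃ s : V, bag i = {s}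

/-- `H` contains an induced cycle of length `n`. -/
def HasInducedCycleOfLength {V : Type} (H : SimpleGraph V) (n : ℕ) : Prop :=
  Nonempty (SimpleGraph.cycleGraph n ↪g H)

/-- The unique reachability graph of an orientation `O` over a set `Sp` of sources:
`s₁` and `s₂` are adjacent iff some vertex is reachable from both `s₁` and `s₂`
but from no other member of `Sp`. -/
def URGraph {V : Type} {H : SimpleGraph V} (O : GraphOrientation H) (Sp : Set V) :
    SimpleGraph V where
  Adj s₁ s₂ := s₁ ∈ Sp ∧ s₂ ∈ Sp ∧ s₁ ≠ s₂ ∧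
    ((O.reach s₁ ∩ O.reach s₂) \ O.reachSet (Sp \ {s₁, s₂})).Nonempty
  symm := by
    constructor
    rintro a b ⟨ha, hb, hab, hx⟩
    refine ⟨hb, ha, hab.symm, ?_⟩
    rwa [Set.inter_comm (O.reach b) (O.reach a), Set.pair_comm b a]
  loopless := by
    constructor
    rintro a ⟨-, -, h, -⟩
    exact h rfl

/-- `(x, (tree, bag))` is a good pair: some leaf `ℓ` of the width-one decomposition,
with unique neighbour `d`, satisfies `reach x ∩ reach ℓ ⊆ reach d`. -/
def GoodPair {V : Type} {H : SimpleGraph V} (O : GraphOrientation H)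
    {ι : Type} (tree : SimpleGraph ι) (bag : ι → Set V) (x : V) : Prop :=
  ∃ (i j : ι) (l d : V), tree.neighborSet i = {j} ∧ bag i = {l} ∧ bag j = {d} ∧
    O.reach x ∩ O.reach l ⊆ O.reach d

/-- The tree obtained from `tree` by attaching one new leaf (the `none` node)
adjacent to the node `i₀`. -/
def extendTree {ι : Type} (tree : SimpleGraph ι) (i₀ : ι) : SimpleGraph (Option ι) where
  Adj a b :=
    (∃ i j, a = some i ∧ b = some j ∧ tree.Adj i j) ∨
      (a = none ∧ b = some i₀) ∨ (a = some i₀ ∧ b = none)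
  symm := by
    constructor
    rintro a b (⟨i, j, rfl, rfl, h⟩ | ⟨rfl, rfl⟩ | ⟨rfl, rfl⟩)
    · exact Or.inl ⟨j, i, rfl, rfl, h.symm⟩
    · exact Or.inr (Or.inr ⟨rfl, rfl⟩)
    · exact Or.inr (Or.inl ⟨rfl, rfl⟩)
  loopless := by
    constructor
    rintro a (⟨i, j, rfl, hj, h⟩ | ⟨rfl, hj⟩ | ⟨hi, hj⟩)
    · cases hj; exact tree.loopless.irrefl _ h
    · cases hj
    · rw [hi] at hj; cases hj

/-- The bag assignment extending `bag` by giving the new leaf (the `none` node)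
the singleton bag `{s}`. -/
def extendBag {V ι : Type} (bag : ι → Set V) (s : V) : Option ι → Set V
  | none => {s}
  | some i => bag i


open SimpleGraph

namespace SimpleGraph

variable {V : Type*} {G : SimpleGraph V}

lemma Walk.IsCycle.not_subsingleton_neighborSet {v : V} {c : G.Walk v v} (hc : c.IsCycle) :
    ¬ (G.neighborSet v).Subsingleton := fun h ↦
  hc.snd_ne_penultimate <| h (c.adj_snd hc.not_nil) (c.adj_penultimate hc.not_nil).symm

lemma IsAcyclic.of_induce {s : Set V} (h : (G.induce s).IsAcyclic)
    (hs : ∀ v ∉ s, (G.neighborSet v).Subsingleton) : G.IsAcyclic := by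
  intro v c hc
  by_cases hcs : ∀ x ∈ c.support, x ∈ s
  · exact h (c.induce s hcs) (Walk.IsCycle.of_map (by rwa [Walk.map_induce]))
  · classical
    push Not at hcs
    obtain ⟨x, hx, hxs⟩ := hcs
    exact (hc.rotate hx).not_subsingleton_neighborSet (hs x hxs)

end SimpleGraph

section extendTree

variable {ι : Type} {tree : SimpleGraph ι} {i₀ : ι}

@[simp]
lemma extendTree_adj_some_some {i j : ι} :
    (extendTree tree i₀).Adj (some i) (some j) ↔ tree.Adj i j := by
  simp [extendTree]

@[simp]
lemma extendTree_adj_none {o : Option ι} :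
    (extendTree tree i₀).Adj none o ↔ o = some i₀ := by
  simp [extendTree]

variable (tree i₀) in
def extendTreeEmbedding : tree ↪g extendTree tree i₀ where
  toEmbedding := Function.Embedding.some
  map_rel_iff' := extendTree_adj_some_some

lemma support_map_extendTreeEmbedding {i k : ι} (q : tree.Walk i k) :
    (q.map (extendTreeEmbedding tree i₀).toHom).support = q.support.map some :=
  Walk.support_map _ _

lemma extendTree_connected (h : tree.Connected) : (extendTree tree i₀).Connected := by
  have hroot : ∀ o, (extendTree tree i₀).Reachable o (some i₀) := by
    rintro (_ | i)
    · exact Adj.reachable (by simp)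
    · exact (h i i₀).map (extendTreeEmbedding tree i₀).toHom
  exact (connected_iff _).mpr ⟨fun a b ↦ (hroot a).trans (hroot b).symm, inferInstance⟩

lemma extendTree_isAcyclic (h : tree.IsAcyclic) : (extendTree tree i₀).IsAcyclic := by
  refine ((extendTreeEmbedding tree i₀).isoInduceRange.isAcyclic_iff.mp h).of_induce ?_
  rintro (_ | i) hi
  · exact Set.subsingleton_of_subset_singleton (a := some i₀) fun _ ↦ extendTree_adj_none.mp
  · exact absurd ⟨i, rfl⟩ hi

lemma extendTree_isTree (h : tree.IsTree) : (extendTree tree i₀).IsTree :=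
  ⟨extendTree_connected h.connected, extendTree_isAcyclic h.isAcyclic⟩

lemma extendTree_support_of_isPath_some (h : tree.IsTree) {i k : ι}
    {p : (extendTree tree i₀).Walk (some i) (some k)} (hp : p.IsPath) :
    ∃ q : tree.Walk i k, q.IsPath ∧ p.support = q.support.map some := by
  obtain ⟨q, hq, -⟩ := h.existsUnique_path i k
  have := ((extendTree_isAcyclic (i₀ := i₀) h.isAcyclic).subsingleton_path _ _).elim ⟨p, hp⟩
    ⟨_, hq.map (f := (extendTreeEmbedding tree i₀).toHom) (Option.some_injective _)⟩
  cases Subtype.mk.inj this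
  exact ⟨q, hq, support_map_extendTreeEmbedding q⟩

lemma extendTree_support_of_isPath_none (h : tree.IsTree) {k : ι}
    {p : (extendTree tree i₀).Walk none (some k)} (hp : p.IsPath) :
    ∃ q : tree.Walk i₀ k, q.IsPath ∧ p.support = none :: q.support.map some := by
  obtain ⟨q, hq, -⟩ := h.existsUnique_path i₀ k
  have hq' := hq.map (f := (extendTreeEmbedding tree i₀).toHom) (Option.some_injective _)
  have := ((extendTree_isAcyclic (i₀ := i₀) h.isAcyclic).subsingleton_path _ _).elim ⟨p, hp⟩
    ⟨.cons (extendTree_adj_none.mpr rfl) _,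
      hq'.cons (support_map_extendTreeEmbedding q ▸ by simp)⟩
  cases Subtype.mk.inj this
  exact ⟨q, hq, congrArg (none :: ·) (support_map_extendTreeEmbedding q)⟩

end extendTree

namespace GraphOrientation

variable {V : Type} {H : SimpleGraph V} (O : GraphOrientation H)

@[simp]
lemma reachSet_singleton (s : V) : O.reachSet {s} = O.reach s :=
  Set.biUnion_singleton _ _

lemma reachSet_mono {B C : Set V} (h : B ⊆ C) : O.reachSet B ⊆ O.reachSet C :=
  Set.biUnion_subset_biUnion_left h

lemma inter_reachSet_subset_iff {A B C : Set V} :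
    A ∩ O.reachSet B ⊆ C ↔ ∀ t ∈ B, A ∩ O.reach t ⊆ C := by
  simp only [reachSet, Set.inter_iUnion₂, Set.iUnion₂_subset_iff]

end GraphOrientation

section extendBag

variable {V ι : Type}

lemma iUnion_extendBag (bag : ι → Set V) (s : V) :
    ⋃ o, extendBag bag s o = (⋃ i, bag i) ∪ {s} := by
  rw [Set.iUnion_option, Set.union_comm]
  rfl

lemma bagWidth_extendBag [Finite ι] (bag : ι → Set V) (s : V) :
    bagWidth (extendBag bag s) = max 1 (bagWidth bag) := by
  have hbdd : BddAbove (Set.range fun o ↦ (extendBag bag s o).ncard) :=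
    (Set.finite_range _).bddAbove
  unfold bagWidth
  apply le_antisymm
  · refine ciSup_le fun o ↦ ?_
    cases o with
    | none => simp [extendBag]
    | some i => exact le_max_of_le_right (le_ciSup (f := fun i ↦ (bag i).ncard)
        (Set.finite_range _).bddAbove i)
  · refine max_le ?_ (ciSup_le' fun i ↦ le_ciSup hbdd (some i))
    simpa [extendBag] using le_ciSup hbdd none

end extendBag

theorem IsPDTD.extend {V : Type} {H : SimpleGraph V} {O : GraphOrientation H} {Sp : Set V}
    {ι : Type} {tree : SimpleGraph ι} {bag : ι → Set V} (hT : IsPDTD O Sp tree bag)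
    {s : V} {i₀ : ι} (hcover : O.reach s ∩ O.reachSet Sp ⊆ O.reachSet (bag i₀)) :
    IsPDTD O (Sp ∪ {s}) (extendTree tree i₀) (extendBag bag s) := by
  obtain ⟨hfin, htree, hsub, hunion, hpath⟩ := hT
  have hleaf : ∀ k c (p : (extendTree tree i₀).Walk none (some k)),
      p.IsPath → c ∈ p.support →
      O.reachSet {s} ∩ O.reachSet (bag k) ⊆ O.reachSet (extendBag bag s c) := by
    intro k c p hp hc
    obtain ⟨q, hq, hpq⟩ := extendTree_support_of_isPath_none htree hp
    rw [hpq] at hc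
    obtain rfl | ⟨j, hj, rfl⟩ := by simpa using hc
    · exact Set.inter_subset_left
    · exact fun x hx ↦ hpath i₀ j k q hq hj
        ⟨hcover ⟨by simpa using hx.1, O.reachSet_mono (hsub k) hx.2⟩, hx.2⟩
  refine ⟨inferInstance, extendTree_isTree htree, ?_, by rw [iUnion_extendBag, hunion], ?_⟩
  · rintro (_ | i)
    · exact Set.subset_union_right
    · exact (hsub i).trans Set.subset_union_left
  rintro (_ | i) c (_ | k) p hp hc
  · cases (Walk.isPath_iff_nil.mp hp).eq_nil
    obtain rfl : c = none := by simpa using hc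
    exact Set.inter_subset_left
  · exact hleaf k c p hp hc
  · rw [Set.inter_comm]
    exact hleaf i c p.reverse hp.reverse (by simpa using hc)
  · obtain ⟨q, hq, hpq⟩ := extendTree_support_of_isPath_some htree hp
    rw [hpq] at hc
    obtain ⟨j, hj, rfl⟩ := by simpa using hc
    exact hpath i j k q hq hj

theorem extend_pdtd_of_cover_general {V : Type} (H : SimpleGraph V)
    (O : GraphOrientation H) (Sp : Set V)
    {ι : Type} (tree : SimpleGraph ι) (bag : ι → Set V)
    (hT : IsPDTD O Sp tree bag) (hw : bagWidth bag = 1)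
    (s : V)
    (d : V)
    (hcover : ∀ s₂ ∈ Sp, O.reach s ∩ O.reach s₂ ⊆ O.reach d)
    (i₀ : ι) (hi₀ : bag i₀ = {d}) :
    IsPDTD O (Sp ∪ {s}) (extendTree tree i₀) (extendBag bag s) ∧
      bagWidth (extendBag bag s) = 1 := by
  have : Finite ι := hT.1
  refine ⟨hT.extend ?_, by rw [bagWidth_extendBag, hw, max_self]⟩
  rw [O.inter_reachSet_subset_iff, hi₀, O.reachSet_singleton]
  exact hcover

/-- Let `T = (tree, bag)` be a width-one partial DAG tree
decomposition with respect to `Sp ⊊ S`, let `s ∈ S ∖ Sp`, and let `d ∈ Sp` be an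
`Sp`-cover of `s` whose singleton bag sits at the node `i₀`.  Then attaching a new
leaf with bag `{s}` to the node `i₀` yields a partial DAG tree decomposition with
respect to `Sp ∪ {s}`, again of width one. -/
theorem extend_pdtd_of_cover {V : Type} [Fintype V] (H : SimpleGraph V)
    (O : GraphOrientation H) (Sp : Set V) (hsub : Sp ⊂ O.sources)
    {ι : Type} (tree : SimpleGraph ι) (bag : ι → Set V)
    (hT : IsPDTD O Sp tree bag) (hw : bagWidth bag = 1)
    (s : V) (hs : s ∈ O.sources) (hsSp : s ∉ Sp)
    (d : V) (hd : d ∈ Sp)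
    (hcover : ∀ s₂ ∈ Sp, O.reach s ∩ O.reach s₂ ⊆ O.reach d)
    (i₀ : ι) (hi₀ : bag i₀ = {d}) :
    IsPDTD O (Sp ∪ {s}) (extendTree tree i₀) (extendBag bag s) ∧
      bagWidth (extendBag bag s) = 1 :=
  extend_pdtd_of_cover_general H O Sp tree bag hT hw s d hcover i₀ hi₀
end

section
/- Let H→ be an acyclic orientation of a simple graph H with source set S, let S′ ⊆ S with |S′| ≥ 3, and suppose every non-empty proper subset of S′ admits a width-one partial DAG tree decomposition. If there exist x ∈ S′ and a width-one partial DAG tree decomposition T of S′ ∖ {x} such that (x, T) is a good pair, then S′ admits a width-one partial DAG tree decomposition. -/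
/-!
Let `ℓ` be the leaf of `T` given by the good pair and `d` its neighbour. Every path of `T`
leaving `ℓ` passes through `d`, so `reach ℓ ∩ reach s ⊆ reach d` for every
`s ∈ S' ∖ {x, ℓ}`; for `s = x` this is the good-pair condition. Now take a width-one
decomposition of the proper subset `S' ∖ {ℓ}` and hang `ℓ` on the node `d` as a new leaf: the
only new paths start at `ℓ` and run through `d`, where the inclusion above is exactly the
decomposition condition.
-/

namespace SimpleGraph

variable {V W : Type*} {G : SimpleGraph V}

lemma Walk.support_subset_range_of_map {f : V ↪ W} {u w : W} (p : (G.map f).Walk u w)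
    (hu : u ∈ Set.range f) : ∀ v ∈ p.support, v ∈ Set.range f := by
  induction p with
  | nil => simpa using hu
  | cons h p ih =>
    obtain ⟨a, b, -, rfl, rfl⟩ := (map_adj _ _ _ _).mp h
    simpa [hu] using ih ⟨b, rfl⟩

lemma IsAcyclic.map (f : V ↪ W) (hG : G.IsAcyclic) : (G.map f).IsAcyclic := by
  intro v c hc
  have hv : v ∈ Set.range f := by
    cases c with
    | nil => exact absurd rfl hc.ne_nil
    | cons h _ => obtain ⟨a, b, -, rfl, -⟩ := (map_adj _ _ _ _).mp h; exact ⟨a, rfl⟩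
  have hsupp := c.support_subset_range_of_map hv
  have hc' : ((c.induce _ hsupp).map (Embedding.induce _).toHom).IsCycle := by
    rwa [c.map_induce hsupp]
  exact (Embedding.map f G).isoInduceRange.isAcyclic_iff.mp hG _
    ((Walk.isCycle_map_iff_of_injective Subtype.val_injective).mp hc')

variable (G) in
def addLeaf (m : V) : SimpleGraph (Option V) := G.map Function.Embedding.some ⊔ edge none (some m)

section addLeaf

variable {m a b : V}

@[simp]
lemma addLeaf_adj_some_some : (G.addLeaf m).Adj (some a) (some b) ↔ G.Adj a b := by
  simpa [addLeaf, edge_adj, map_adj'] using Adj.ne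

@[simp]
lemma addLeaf_adj_none_left {v : Option V} : (G.addLeaf m).Adj none v ↔ v = some m := by
  aesop (add simp [addLeaf, edge_adj, map_adj'])

variable (G m) in
def addLeafHom : G →g G.addLeaf m := ⟨some, addLeaf_adj_some_some.mpr⟩

lemma Connected.addLeaf (hG : G.Connected) : (G.addLeaf m).Connected := by
  refine (connected_iff_exists_forall_reachable _).mpr ⟨some m, ?_⟩
  rintro (_ | a)
  · exact (Adj.reachable (by simp)).symm
  · exact (hG.preconnected m a).map (G.addLeafHom m)

lemma IsAcyclic.addLeaf (hG : G.IsAcyclic) : (G.addLeaf m).IsAcyclic := by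
  refine (hG.map _).sup_edge_of_not_reachable fun h => ?_
  obtain ⟨p⟩ := h
  cases p with
  | cons h _ => simp [map_adj'] at h

lemma IsTree.addLeaf (hG : G.IsTree) : (G.addLeaf m).IsTree :=
  ⟨hG.connected.addLeaf, hG.isAcyclic.addLeaf⟩

lemma IsTree.exists_support_eq_map_of_isPath_addLeaf (hG : G.IsTree)
    {p : (G.addLeaf m).Walk (some a) (some b)}
    (hp : p.IsPath) : ∃ q : G.Walk a b, q.IsPath ∧ p.support = q.support.map some := by
  obtain ⟨q, hq⟩ := hG.connected.exists_isPath a b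
  have hqp : (q.map (G.addLeafHom m)).IsPath := hq.map (Option.some_injective V)
  have hpq : p = q.map (G.addLeafHom m) := congrArg Subtype.val <|
    (hG.addLeaf.isAcyclic.subsingleton_path _ _).elim ⟨p, hp⟩ ⟨_, hqp⟩
  exact ⟨q, hq, by rw [hpq]; exact Walk.support_map _ _⟩

lemma IsTree.exists_support_eq_cons_of_isPath_addLeaf (hG : G.IsTree)
    {p : (G.addLeaf m).Walk none (some b)}
    (hp : p.IsPath) : ∃ q : G.Walk m b, q.IsPath ∧ p.support = none :: q.support.map some := by
  cases p with
  | cons h p =>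
    obtain rfl := addLeaf_adj_none_left.mp h
    obtain ⟨q, hq, hpq⟩ := hG.exists_support_eq_map_of_isPath_addLeaf hp.of_cons
    exact ⟨q, hq, by rw [Walk.support_cons, hpq]⟩

end addLeaf

end SimpleGraph

open SimpleGraph

section PDTD

variable {V : Type} {H : SimpleGraph V} {O : GraphOrientation H} {Sp : Set V}
  {ι : Type} {tree : SimpleGraph ι} {bag : ι → Set V}

lemma IsPDTD.reachSet_inter_subset_of_neighborSet_eq (h : IsPDTD O Sp tree bag) {i j k : ι}
    (hij : tree.neighborSet i = {j}) (hki : k ≠ i) :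
    O.reachSet (bag i) ∩ O.reachSet (bag k) ⊆ O.reachSet (bag j) := by
  obtain ⟨p, hp⟩ := h.2.1.connected.exists_isPath i k
  cases p with
  | nil => exact absurd rfl hki
  | @cons _ v _ hadj r =>
    obtain rfl : v = j := hij.subset hadj
    exact h.2.2.2.2 _ _ _ _ hp (by simp)

lemma IsPDTD.addLeaf (h : IsPDTD O Sp tree bag) {B : Set V} (m : ι)
    (hm : ∀ k, O.reachSet B ∩ O.reachSet (bag k) ⊆ O.reachSet (bag m)) :
    IsPDTD O (B ∪ Sp) (tree.addLeaf m) (fun o => o.elim B bag) := by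
  obtain ⟨hfin, htree, hsub, hunion, hcond⟩ := h
  have hleaf : ∀ (b : ι) (j : Option ι) (p : (tree.addLeaf m).Walk none (some b)), p.IsPath →
      j ∈ p.support → O.reachSet B ∩ O.reachSet (bag b) ⊆ O.reachSet (j.elim B bag) := by
    intro b j p hp hj
    obtain ⟨q, hq, hpq⟩ := htree.exists_support_eq_cons_of_isPath_addLeaf hp
    rw [hpq, List.mem_cons, List.mem_map] at hj
    obtain rfl | ⟨j, hj, rfl⟩ := hj
    · exact Set.inter_subset_left
    · exact fun v hv => hcond m j b q hq hj ⟨hm b hv, hv.2⟩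
  refine ⟨inferInstance, htree.addLeaf, ?_, ?_, ?_⟩
  · rintro (_ | k)
    · exact Set.subset_union_left
    · exact (hsub k).trans Set.subset_union_right
  · rw [Set.iUnion_option, ← hunion]
    rfl
  · rintro (_ | a) j (_ | b) p hp hj
    · obtain rfl := (Walk.isPath_iff_nil.mp hp).eq_nil
      obtain rfl := List.mem_singleton.mp hj
      exact Set.inter_subset_left
    · exact hleaf b j p hp hj
    · rw [Set.inter_comm]
      exact hleaf a j p.reverse hp.reverse (by simpa using hj)
    · obtain ⟨q, hq, hpq⟩ := htree.exists_support_eq_map_of_isPath_addLeaf hp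
      rw [hpq, List.mem_map] at hj
      obtain ⟨j, hj, rfl⟩ := hj
      exact hcond a j b q hq hj

lemma IsWidthOnePDTD.exists_bag_eq (h : IsWidthOnePDTD O Sp tree bag) {s : V} (hs : s ∈ Sp) :
    ∃ k, bag k = {s} := by
  rw [← h.1.2.2.2.1, Set.mem_iUnion] at hs
  obtain ⟨k, hk⟩ := hs
  obtain ⟨t, ht⟩ := h.2.2 k
  rw [ht, Set.mem_singleton_iff] at hk
  exact ⟨k, hk ▸ ht⟩

lemma IsWidthOnePDTD.mem_of_bag_eq (h : IsWidthOnePDTD O Sp tree bag) {k : ι} {s : V}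
    (hk : bag k = {s}) : s ∈ Sp :=
  h.1.2.2.1 k (hk ▸ rfl)

lemma IsWidthOnePDTD.reach_inter_subset_of_neighborSet_eq (h : IsWidthOnePDTD O Sp tree bag)
    {i j : ι} {l d s : V} (hij : tree.neighborSet i = {j}) (hi : bag i = {l}) (hj : bag j = {d})
    (hs : s ∈ Sp) (hsl : s ≠ l) : O.reach l ∩ O.reach s ⊆ O.reach d := by
  obtain ⟨k, hk⟩ := h.exists_bag_eq hs
  have hki : k ≠ i := fun hki => hsl (by simpa [hki, hi] using hk.symm)
  simpa [hi, hj, hk] using h.1.reachSet_inter_subset_of_neighborSet_eq hij hki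

lemma IsWidthOnePDTD.addLeaf (h : IsWidthOnePDTD O Sp tree bag) {l d : V} {m : ι}
    (hl : l ∉ Sp) (hm : bag m = {d})
    (hreach : ∀ s ∈ Sp, O.reach l ∩ O.reach s ⊆ O.reach d) :
    IsWidthOnePDTD O (insert l Sp) (tree.addLeaf m) (fun o => o.elim {l} bag) := by
  refine ⟨?_, ?_, ?_⟩
  · rw [Set.insert_eq]
    refine h.1.addLeaf m fun k => ?_
    obtain ⟨s, hs⟩ := h.2.2 k
    simpa [hs, hm] using hreach s (h.mem_of_bag_eq hs)
  · rintro (_ | a) (_ | b) hab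
    · rfl
    · exact absurd (h.mem_of_bag_eq hab.symm) hl
    · exact absurd (h.mem_of_bag_eq hab) hl
    · exact congrArg some (h.2.1 hab)
  · rintro (_ | k)
    · exact ⟨l, rfl⟩
    · exact h.2.2 k

end PDTD

theorem pdtd_of_goodPair_general {V : Type} (H : SimpleGraph V)
    (O : GraphOrientation H) (S' : Set V)
    (hind : ∀ Sp : Set V, Sp ⊆ S' → Sp.Nonempty → Sp ≠ S' →
      ∃ (κ : Type) (tr : SimpleGraph κ) (bg : κ → Set V), IsWidthOnePDTD O Sp tr bg)
    (x : V)
    {ι : Type} (tree : SimpleGraph ι) (bag : ι → Set V)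
    (hT : IsWidthOnePDTD O (S' \ {x}) tree bag)
    (hgood : GoodPair O tree bag x) :
    ∃ (κ : Type) (tr : SimpleGraph κ) (bg : κ → Set V), IsWidthOnePDTD O S' tr bg := by
  obtain ⟨i, j, l, d, hij, hi, hj, hxl⟩ := hgood
  have hl : l ∈ S' \ {x} := hT.mem_of_bag_eq hi
  have hd : d ∈ S' \ {x} := hT.mem_of_bag_eq hj
  have hld : l ≠ d := by
    have hadj : tree.Adj i j := hij.symm.subset (Set.mem_singleton j)
    exact fun h => hadj.ne (hT.2.1 (by rw [hi, hj, h]))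
  have hreach : ∀ s ∈ S' \ {l}, O.reach l ∩ O.reach s ⊆ O.reach d := by
    rintro s ⟨hs, hsl⟩
    by_cases hsx : s = x
    · rw [hsx, Set.inter_comm]
      exact hxl
    · exact hT.reach_inter_subset_of_neighborSet_eq hij hi hj ⟨hs, hsx⟩ hsl
  obtain ⟨κ, tr, bg, hT'⟩ := hind (S' \ {l}) Set.sdiff_subset ⟨d, hd.1, hld.symm⟩
    fun h => (h.symm ▸ hl.1 : l ∈ S' \ {l}).2 rfl
  obtain ⟨m, hm⟩ := hT'.exists_bag_eq ⟨hd.1, hld.symm⟩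
  refine ⟨Option κ, tr.addLeaf m, fun o => o.elim {l} bg, ?_⟩
  simpa [Set.insert_eq_of_mem hl.1] using hT'.addLeaf (fun h => h.2 rfl) hm hreach

/-- Let `S'` be a set of sources of an acyclic orientation with
`|S'| ≥ 3` such that every non-empty proper subset of `S'` admits a width-one
partial DAG tree decomposition.  If for some `x ∈ S'` there is a width-one partial
DAG tree decomposition `T` of `S' ∖ {x}` such that `(x, T)` is a good pair, then
`S'` admits a width-one partial DAG tree decomposition. -/
theorem pdtd_of_goodPair {V : Type} [Fintype V] (H : SimpleGraph V)
    (O : GraphOrientation H) (S' : Set V) (hS' : S' ⊆ O.sources) (h3 : 3 ≤ S'.ncard)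
    (hind : ∀ Sp : Set V, Sp ⊆ S' → Sp.Nonempty → Sp ≠ S' →
      ∃ (κ : Type) (tr : SimpleGraph κ) (bg : κ → Set V), IsWidthOnePDTD O Sp tr bg)
    (x : V) (hx : x ∈ S')
    {ι : Type} (tree : SimpleGraph ι) (bag : ι → Set V)
    (hT : IsWidthOnePDTD O (S' \ {x}) tree bag)
    (hgood : GoodPair O tree bag x) :
    ∃ (κ : Type) (tr : SimpleGraph κ) (bg : κ → Set V), IsWidthOnePDTD O S' tr bg :=
  pdtd_of_goodPair_general H O S' hind x tree bag hT hgood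
end

section
/- Let H be a simple graph with LICL(H) ≤ 5, let H→ be an acyclic orientation of H with source set S, let S′ ⊆ S with |S′| ≥ 3, and for each x ∈ S′ let T_x be a width-one partial DAG tree decomposition with respect to S′ ∖ {x}. Then there exists x ∈ S′ such that (x, T_x) is a good pair. -/
/-!
Suppose that no `x ∈ S'` gives a good pair. In each `T_x` (a tree on at least two nodes) take two
leaves; a leaf `ℓ` whose neighbour `d` is not an intersection-cover of `x` and `ℓ` gives a vertex
reachable from `x` and `ℓ` but, since the tree path from `ℓ` to any other bag runs through `d`,
from no other source of `S'`. So every `x ∈ S'` has two neighbours in the unique reachability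
graph of `S'`, which therefore contains a cycle `s₀, …, s_{k-1}` with `k ≥ 3`.

Let `w_i` be a witness of the edge `s_i s_{i+1}`. Directed paths from an apex below `s_i` down to
`w_{i-1}` and to `w_i` close up into a walk of length at least `2k ≥ 6` in `H`. Among all such
walks take one of minimal length: a repeated vertex or a chord would give a shorter choice of
apices and witnesses, and vertices of non-consecutive segments are not even related by
reachability, because each witness is reachable from its two sources only. Hence the walk is an
induced cycle of length at least six.
-/

namespace Fin

variable {k : ℕ} [NeZero k]

lemma one_add_one_ne_zero (hk : 3 ≤ k) : (1 + 1 : Fin k) ≠ 0 := by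
  rw [ne_eq, Fin.ext_iff, Fin.val_add, Fin.val_one', Nat.mod_eq_of_lt (by omega : 1 < k)]
  simp [Nat.mod_eq_of_lt (by omega : 2 < k)]

lemma add_one_ne_self (hk : 2 ≤ k) (i : Fin k) : i + 1 ≠ i := by
  rw [ne_eq, add_eq_left, Fin.ext_iff, Fin.val_one', Nat.mod_eq_of_lt (by omega : 1 < k)]
  simp

lemma sub_one_ne_self (hk : 2 ≤ k) (i : Fin k) : i - 1 ≠ i := by
  simpa using (add_one_ne_self hk (i - 1)).symm

lemma sub_one_ne_add_one (hk : 3 ≤ k) (i : Fin k) : i - 1 ≠ i + 1 := by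
  intro h
  apply one_add_one_ne_zero hk
  rw [← add_eq_left (a := i), ← add_assoc, ← h, sub_add_cancel]

lemma add_one_add_one_ne_self (hk : 3 ≤ k) (i : Fin k) : i + 1 + 1 ≠ i := by
  simpa using (sub_one_ne_add_one hk (i + 1)).symm

end Fin

section CyclicOrder

variable {m : ℕ} {n : Fin m → ℕ}

def finSigmaSucc [NeZero m] (hn : ∀ i, 0 < n i) (p : (i : Fin m) × Fin (n i)) :
    (i : Fin m) × Fin (n i) :=
  if h : p.2.1 + 1 < n p.1 then ⟨p.1, ⟨p.2.1 + 1, h⟩⟩ else ⟨p.1 + 1, ⟨0, hn _⟩⟩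

lemma Fin.sum_univ_eq_sum_range_dite :
    ∑ i, n i = ∑ l ∈ Finset.range m, (if h : l < m then n ⟨l, h⟩ else 0) := by
  rw [← Fin.sum_univ_eq_sum_range]
  simp

lemma finSigmaFinEquiv_val_eq_sum_range (p : (i : Fin m) × Fin (n i)) :
    (finSigmaFinEquiv p : ℕ) =
      ∑ l ∈ Finset.range p.1, (if h : l < m then n ⟨l, h⟩ else 0) + p.2 := by
  rw [finSigmaFinEquiv_apply, ← Fin.sum_univ_eq_sum_range]
  congr 1
  refine Finset.sum_congr rfl fun l _ => ?_
  simp [Fin.castLE, show (l : ℕ) < m by omega]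

lemma finSigmaSucc_of_lt [NeZero m] (hn : ∀ i, 0 < n i) {i : Fin m} {a : Fin (n i)}
    (h : a.1 + 1 < n i) : finSigmaSucc hn ⟨i, a⟩ = ⟨i, ⟨a.1 + 1, h⟩⟩ :=
  dif_pos h

lemma finSigmaSucc_of_add_one_eq [NeZero m] (hn : ∀ i, 0 < n i) {i : Fin m} {a : Fin (n i)}
    (h : a.1 + 1 = n i) : finSigmaSucc hn ⟨i, a⟩ = ⟨i + 1, ⟨0, hn _⟩⟩ :=
  dif_neg (by dsimp only; omega)

lemma finSigmaFinEquiv_finSigmaSucc [NeZero m] (hn : ∀ i, 0 < n i) (p : (i : Fin m) × Fin (n i)) :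
    (finSigmaFinEquiv (finSigmaSucc hn p) : ℕ) = ((finSigmaFinEquiv p : ℕ) + 1) % ∑ i, n i := by
  obtain ⟨i, a⟩ := p
  have hlt := (finSigmaFinEquiv (finSigmaSucc hn ⟨i, a⟩)).isLt
  by_cases h : a.1 + 1 < n i
  · simp only [finSigmaSucc, dif_pos h] at hlt ⊢
    rw [finSigmaFinEquiv_val_eq_sum_range] at hlt
    rw [finSigmaFinEquiv_val_eq_sum_range, finSigmaFinEquiv_val_eq_sum_range]
    dsimp only at hlt ⊢
    rw [Nat.mod_eq_of_lt (by omega)]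
    omega
  obtain ⟨m, rfl⟩ : ∃ m', m = m' + 1 := ⟨m - 1, by have := NeZero.ne m; omega⟩
  have ha : a.1 + 1 = n i := by omega
  simp only [finSigmaSucc, dif_neg h] at hlt ⊢
  rw [finSigmaFinEquiv_val_eq_sum_range] at hlt ⊢
  rw [finSigmaFinEquiv_val_eq_sum_range]
  simp only [Fin.val_add_one] at hlt ⊢
  split_ifs at hlt ⊢ with hi
  · subst hi
    have hlast : n (Fin.last m) = if h : m < m + 1 then n ⟨m, h⟩ else 0 := by simp [Fin.last]
    rw [Fin.sum_univ_eq_sum_range_dite, Finset.sum_range_succ, Fin.val_last, add_assoc, ha, hlast,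
      Nat.mod_self]
    simp
  · have hi' : (i : ℕ) < m := Fin.val_lt_last hi
    rw [Finset.sum_range_succ] at hlt ⊢
    simp only [dif_pos (Nat.lt_succ_of_lt hi'), Fin.eta] at hlt ⊢
    rw [Nat.mod_eq_of_lt (by omega)]
    omega

end CyclicOrder

lemma hasInducedCycleOfLength_of_adj_iff {V : Type} {H : SimpleGraph V} {N : ℕ} (hN : 2 ≤ N)
    (f : Fin N → V) (hf : Function.Injective f)
    (hadj : ∀ u v, H.Adj (f u) (f v) ↔ (v : ℕ) = (u + 1) % N ∨ (u : ℕ) = (v + 1) % N) :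
    HasInducedCycleOfLength H N := by
  obtain ⟨N, rfl⟩ : ∃ N', N = N' + 2 := ⟨N - 2, by omega⟩
  refine ⟨⟨⟨f, hf⟩, fun {u v} => ?_⟩⟩
  rw [SimpleGraph.cycleGraph_adj]
  simp only [Function.Embedding.coeFn_mk, hadj, sub_eq_iff_eq_add, Fin.ext_iff, Fin.val_add,
    Fin.val_one, Nat.add_comm 1]
  exact or_comm

namespace SimpleGraph

lemma Walk.mem_support_of_neighborSet_eq_singleton {W : Type} {G : SimpleGraph W}
    {i j n : W} (hij : G.neighborSet i = {j}) (p : G.Walk i n) (hn : i ≠ n) : j ∈ p.support := by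
  have hsnd : p.snd ∈ G.neighborSet i := p.adj_snd (SimpleGraph.Walk.not_nil_of_ne hn)
  rw [hij, Set.mem_singleton_iff] at hsnd
  exact hsnd ▸ p.getVert_mem_support 1

/-- A non-backtracking walk started on an edge must revisit a vertex; the first repetition
closes a cycle. -/
lemma exists_cycle_of_forall_adj {W : Type} [Finite W] {G : SimpleGraph W}
    {x₀ x₁ : W} (h01 : G.Adj x₀ x₁) (hnext : ∀ u v, G.Adj u v → ∃ w, G.Adj v w ∧ w ≠ u) :
    ∃ k, ∃ f : Fin (k + 3) → W, Function.Injective f ∧ ∀ i, G.Adj (f i) (f (i + 1)) := by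
  classical
  choose next hnext_adj hnext_ne using hnext
  let dart : ℕ → G.Dart := fun n => Nat.rec ⟨(x₀, x₁), h01⟩
    (fun _ d => ⟨(d.snd, next _ _ d.adj), hnext_adj _ _ d.adj⟩) n
  let g : ℕ → W := fun n => (dart n).fst
  have hg_adj (n : ℕ) : G.Adj (g n) (g (n + 1)) := (dart n).adj
  have hg_ne (n : ℕ) : g (n + 2) ≠ g n := hnext_ne _ _ (dart n).adj
  have hrep : ∃ b, ∃ a < b, g a = g b := by
    obtain ⟨a, b, hab, heq⟩ := Finite.exists_ne_map_eq_of_infinite g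
    rcases hab.lt_or_gt with h | h
    · exact ⟨b, a, h, heq⟩
    · exact ⟨a, b, h, heq.symm⟩
  obtain ⟨a, hab, heq⟩ := Nat.find_spec hrep
  have hinj {p q : ℕ} (hpq : p < q) (hq : q < Nat.find hrep) : g p ≠ g q :=
    fun h => Nat.find_min hrep hq ⟨p, hpq, h⟩
  obtain ⟨k, hk⟩ : ∃ k, Nat.find hrep = a + (k + 3) := by
    refine ⟨Nat.find hrep - a - 3, ?_⟩
    have h1 : Nat.find hrep ≠ a + 1 := fun h => (hg_adj a).ne (h ▸ heq)
    have h2 : Nat.find hrep ≠ a + 2 := fun h => hg_ne a (h ▸ heq).symm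
    omega
  refine ⟨k, fun i => g (a + i), fun i j hij => ?_, fun i => ?_⟩
  · by_contra hne
    rcases lt_or_gt_of_ne (Fin.val_ne_of_ne hne) with h | h
    · exact hinj (by omega) (by omega) hij
    · exact hinj (by omega) (by omega) hij.symm
  · dsimp only
    rw [Fin.val_add_one]
    split_ifs with hi
    · have := hg_adj (a + (k + 2))
      rw [show a + (k + 2) + 1 = Nat.find hrep by omega, ← heq] at this
      simpa [hi] using this
    · exact hg_adj _

end SimpleGraph

namespace GraphOrientation

variable {V : Type} {H : SimpleGraph V}

lemma reachSet_singleton_s9 (O : GraphOrientation H) (t : V) : O.reachSet {t} = O.reach t := by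
  simp [reachSet]

lemma reach_trans {O : GraphOrientation H} {s u v : V} (hu : u ∈ O.reach s)
    (hv : v ∈ O.reach u) : v ∈ O.reach s :=
  Relation.ReflTransGen.trans hu hv

structure DirWalk (O : GraphOrientation H) (x y : V) where
  length : ℕ
  vert : ℕ → V
  vert_zero : vert 0 = x
  vert_length : vert length = y
  rel : ∀ m < length, O.D (vert m) (vert (m + 1))

namespace DirWalk

variable {O : GraphOrientation H} {x y z x' y' : V}

def cast (p : DirWalk O x y) (hx : x = x') (hy : y = y') : DirWalk O x' y' :=
  ⟨p.length, p.vert, hx ▸ p.vert_zero, hy ▸ p.vert_length, p.rel⟩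

@[simp] lemma length_cast (p : DirWalk O x y) (hx : x = x') (hy : y = y') :
    (p.cast hx hy).length = p.length := rfl

def nil (x : V) : DirWalk O x x :=
  ⟨0, fun _ => x, rfl, rfl, fun _ h => absurd h (Nat.not_lt_zero _)⟩

@[simp] lemma length_nil (x : V) : (nil (O := O) x).length = 0 := rfl

def single (h : O.D x y) : DirWalk O x y :=
  ⟨1, fun m => if m = 0 then x else y, rfl, rfl, fun m hm => by
    obtain rfl : m = 0 := by omega
    simpa using h⟩

def append (p : DirWalk O x y) (q : DirWalk O y z) : DirWalk O x z where
  length := p.length + q.length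
  vert m := if m ≤ p.length then p.vert m else q.vert (m - p.length)
  vert_zero := by simp [p.vert_zero]
  vert_length := by
    by_cases hq : q.length = 0
    · obtain rfl : y = z := by simpa [hq, q.vert_zero] using q.vert_length
      simp [hq, p.vert_length]
    · simp [show ¬ p.length + q.length ≤ p.length by omega, q.vert_length]
  rel m hm := by
    rcases lt_trichotomy m p.length with h | rfl | h
    · simpa [h.le, Nat.succ_le_of_lt h] using p.rel m h
    · simpa [p.vert_length, ← q.vert_zero] using q.rel 0 (by omega)
    · simpa [show ¬ m ≤ p.length by omega, show ¬ m + 1 ≤ p.length by omega,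
        Nat.sub_add_comm h.le] using q.rel (m - p.length) (by omega)

@[simp] lemma length_append (p : DirWalk O x y) (q : DirWalk O y z) :
    (p.append q).length = p.length + q.length := rfl

def ofFwd (f : ℕ → V) {a b : ℕ} (hab : a ≤ b)
    (h : ∀ m, a ≤ m → m < b → O.D (f m) (f (m + 1))) : DirWalk O (f a) (f b) where
  length := b - a
  vert p := f (a + p)
  vert_zero := rfl
  vert_length := by rw [Nat.add_sub_cancel' hab]
  rel m hm := h (a + m) (by omega) (by omega)

def ofRev (f : ℕ → V) {a b : ℕ} (hab : a ≤ b)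
    (h : ∀ m, a ≤ m → m < b → O.D (f (m + 1)) (f m)) : DirWalk O (f b) (f a) where
  length := b - a
  vert p := f (b - p)
  vert_zero := rfl
  vert_length := by rw [Nat.sub_sub_self hab]
  rel m hm := by
    have := h (b - (m + 1)) (by omega) (by omega)
    rwa [show b - (m + 1) + 1 = b - m by omega] at this

lemma vert_mem_reach_vert (p : DirWalk O x y) {m n : ℕ} (hmn : m ≤ n) (hn : n ≤ p.length) :
    p.vert n ∈ O.reach (p.vert m) := by
  induction n, hmn using Nat.le_induction with
  | base => exact Relation.ReflTransGen.refl
  | succ n _ ih => exact (ih (by omega)).tail (p.rel n (by omega))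

lemma mem_reach (p : DirWalk O x y) : y ∈ O.reach x := by
  simpa [p.vert_zero, p.vert_length] using p.vert_mem_reach_vert (Nat.zero_le _) le_rfl

lemma transGen (p : DirWalk O x y) (hp : 0 < p.length) : Relation.TransGen O.D x y := by
  simpa [p.vert_zero, p.vert_length] using
    Relation.TransGen.head' (p.rel 0 hp) (p.vert_mem_reach_vert hp le_rfl)

lemma length_eq_zero_of_eq (p : DirWalk O x x) : p.length = 0 := by
  by_contra hp
  exact O.acyclic x (p.transGen (Nat.pos_of_ne_zero hp))

lemma nonempty_of_mem_reach (h : y ∈ O.reach x) : Nonempty (DirWalk O x y) := by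
  induction h with
  | refl => exact ⟨nil x⟩
  | tail _ hd ih => exact ⟨ih.some.append (single hd)⟩

section Valley

variable {t : V}

def valley (A : DirWalk O t x) (B : DirWalk O t y) (a : ℕ) : V :=
  if a ≤ A.length then A.vert (A.length - a) else B.vert (a - A.length)

variable (A : DirWalk O t x) (B : DirWalk O t y)

lemma valley_zero : valley A B 0 = x := by
  simp [valley, A.vert_length]

lemma valley_length : valley A B A.length = t := by
  simp [valley, A.vert_zero]

lemma valley_length_add : valley A B (A.length + B.length) = y := by
  by_cases hB : B.length = 0
  · obtain rfl : t = y := by simpa [hB, B.vert_zero] using B.vert_length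
    simpa [hB] using valley_length A B
  · simp [valley, show ¬ A.length + B.length ≤ A.length by omega, B.vert_length]

lemma rel_valley_of_lt {a : ℕ} (ha : a < A.length) :
    O.D (valley A B (a + 1)) (valley A B a) := by
  have := A.rel (A.length - (a + 1)) (by omega)
  rw [show A.length - (a + 1) + 1 = A.length - a by omega] at this
  simpa [valley, ha.le, Nat.succ_le_of_lt ha] using this

lemma rel_valley_of_le {a : ℕ} (ha : A.length ≤ a) (ha' : a < A.length + B.length) :
    O.D (valley A B a) (valley A B (a + 1)) := by
  rcases ha.eq_or_lt with rfl | ha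
  · simpa [valley, A.vert_zero, ← B.vert_zero] using B.rel 0 (by omega)
  · simpa [valley, show ¬ a ≤ A.length by omega, show ¬ a + 1 ≤ A.length by omega,
      Nat.sub_add_comm ha.le] using B.rel (a - A.length) (by omega)

end Valley

end DirWalk

/-- A closed walk in `H` through `k` segments: segment `i` climbs against the orientation from
`vert i 0` to an apex below `s i`, then descends to `vert i (len i) = vert (i + 1) 0`, a witness
of the edge between `s i` and `s (i + 1)` in the unique reachability graph of `S'`. -/
structure Zigzag (O : GraphOrientation H) (S' : Set V) {k : ℕ} [NeZero k] (s : Fin k → V) where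
  len : Fin k → ℕ
  peak : Fin k → ℕ
  vert : Fin k → ℕ → V
  peak_le_len : ∀ i, peak i ≤ len i
  rel_of_lt_peak : ∀ i a, a < peak i → O.D (vert i (a + 1)) (vert i a)
  rel_of_peak_le : ∀ i a, peak i ≤ a → a < len i → O.D (vert i a) (vert i (a + 1))
  vert_len : ∀ i, vert i (len i) = vert (i + 1) 0
  apex_mem_reach : ∀ i, vert i (peak i) ∈ O.reach (s i)
  eq_of_mem_reach : ∀ i, ∀ y ∈ S', vert i (len i) ∈ O.reach y → y = s i ∨ y = s (i + 1)

namespace Zigzag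

open DirWalk

variable {O : GraphOrientation H} {S' : Set V} {k : ℕ} [NeZero k] {s : Fin k → V}

section Basic

variable (z : Zigzag O S' s)

def length : ℕ := ∑ i, z.len i

def walkAsc (i : Fin k) {a b : ℕ} (hab : a ≤ b) (hb : b ≤ z.peak i) :
    DirWalk O (z.vert i b) (z.vert i a) :=
  DirWalk.ofRev (z.vert i) hab fun m _ hm => z.rel_of_lt_peak i m (by omega)

def walkDesc (i : Fin k) {a b : ℕ} (ha : z.peak i ≤ a) (hab : a ≤ b) (hb : b ≤ z.len i) :
    DirWalk O (z.vert i a) (z.vert i b) :=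
  DirWalk.ofFwd (z.vert i) hab fun m hm hm' => z.rel_of_peak_le i m (by omega) (by omega)

@[simp] lemma length_walkAsc (i : Fin k) {a b : ℕ} (hab : a ≤ b) (hb : b ≤ z.peak i) :
    (z.walkAsc i hab hb).length = b - a := rfl

@[simp] lemma length_walkDesc (i : Fin k) {a b : ℕ} (ha : z.peak i ≤ a) (hab : a ≤ b)
    (hb : b ≤ z.len i) : (z.walkDesc i ha hab hb).length = b - a := rfl

lemma vert_mem_reach (i : Fin k) {a : ℕ} (ha : a ≤ z.len i) : z.vert i a ∈ O.reach (s i) := by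
  rcases le_total a (z.peak i) with h | h
  · exact reach_trans (z.apex_mem_reach i) (z.walkAsc i h le_rfl).mem_reach
  · exact reach_trans (z.apex_mem_reach i) (z.walkDesc i le_rfl h ha).mem_reach

lemma eq_of_mem_reach_vert_zero (i : Fin k) :
    ∀ y ∈ S', z.vert i 0 ∈ O.reach y → y = s (i - 1) ∨ y = s i := by
  simpa [z.vert_len] using z.eq_of_mem_reach (i - 1)

lemma adj_vert_succ (i : Fin k) {a : ℕ} (ha : a < z.len i) :
    H.Adj (z.vert i a) (z.vert i (a + 1)) := by
  rcases lt_or_ge a (z.peak i) with h | h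
  · exact (O.adj_of_rel _ _ (z.rel_of_lt_peak i a h)).symm
  · exact O.adj_of_rel _ _ (z.rel_of_peak_le i a h ha)

lemma adj_vert_finSigmaSucc (hn : ∀ i, 0 < z.len i)
    (p : (i : Fin k) × Fin (z.len i)) :
    H.Adj (z.vert p.1 p.2) (z.vert (finSigmaSucc hn p).1 (finSigmaSucc hn p).2) := by
  obtain ⟨i, a⟩ := p
  by_cases h : a.1 + 1 < z.len i
  · rw [finSigmaSucc_of_lt hn h]
    exact z.adj_vert_succ i a.2
  · rw [finSigmaSucc_of_add_one_eq hn (by omega)]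
    have := z.adj_vert_succ i a.2
    rwa [show a.1 + 1 = z.len i by omega, z.vert_len] at this

lemma exists_walks_prefix (i : Fin k) {a : ℕ} (ha : a ≤ z.len i) :
    ∃ t ∈ O.reach (s i), ∃ (A : DirWalk O t (z.vert i 0)) (B : DirWalk O t (z.vert i a)),
      A.length + B.length = a := by
  rcases le_total a (z.peak i) with h | h
  · exact ⟨_, z.vert_mem_reach i ha, z.walkAsc i (Nat.zero_le a) h, nil _, by simp⟩
  · exact ⟨_, z.apex_mem_reach i, z.walkAsc i (Nat.zero_le _) le_rfl,
      z.walkDesc i le_rfl h ha, by simp only [length_walkAsc, length_walkDesc]; omega⟩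

lemma exists_walks_suffix (i : Fin k) {c : ℕ} (hc : c ≤ z.len i) :
    ∃ t ∈ O.reach (s i), ∃ (C : DirWalk O t (z.vert i c)) (E : DirWalk O t (z.vert i (z.len i))),
      C.length + E.length = z.len i - c := by
  rcases le_total c (z.peak i) with h | h
  · exact ⟨_, z.apex_mem_reach i, z.walkAsc i h le_rfl,
      z.walkDesc i le_rfl (z.peak_le_len i) le_rfl, by
        simp only [length_walkAsc, length_walkDesc]
        have := z.peak_le_len i
        omega⟩
  · exact ⟨_, z.vert_mem_reach i hc, nil _, z.walkDesc i h hc le_rfl, by simp⟩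

/-- Replace segments `i` and `i + 1` by the valleys `A, B` and `C, E`, which meet at `v`. -/
def update (hk : 3 ≤ k) (i : Fin k) {t t' v : V} (A : DirWalk O t (z.vert i 0))
    (B : DirWalk O t v) (C : DirWalk O t' v)
    (E : DirWalk O t' (z.vert (i + 1) (z.len (i + 1))))
    (ht : t ∈ O.reach (s i)) (ht' : t' ∈ O.reach (s (i + 1)))
    (hv : ∀ y ∈ S', v ∈ O.reach y → y = s i ∨ y = s (i + 1)) : Zigzag O S' s where
  len j := if j = i then A.length + B.length else if j = i + 1 then C.length + E.length
    else z.len j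
  peak j := if j = i then A.length else if j = i + 1 then C.length else z.peak j
  vert j := if j = i then A.valley B else if j = i + 1 then C.valley E else z.vert j
  peak_le_len j := by
    split_ifs
    · omega
    · omega
    · exact z.peak_le_len j
  rel_of_lt_peak j a := by
    split_ifs
    · exact A.rel_valley_of_lt B
    · exact C.rel_valley_of_lt E
    · exact z.rel_of_lt_peak j a
  rel_of_peak_le j a := by
    split_ifs
    · exact A.rel_valley_of_le B
    · exact C.rel_valley_of_le E
    · exact z.rel_of_peak_le j a
  vert_len j := by
    have h1 := Fin.add_one_ne_self (by omega) i
    have h2 := Fin.add_one_add_one_ne_self hk i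
    by_cases hj : j = i
    · subst hj
      simp [h1, valley_length_add, valley_zero]
    by_cases hj' : j = i + 1
    · subst hj'
      simp [hj, h2, Fin.add_one_ne_self (by omega) (i + 1), valley_length_add, z.vert_len]
    by_cases hji : j + 1 = i
    · subst hji
      simp [hj, hj', valley_zero, z.vert_len]
    · have : j + 1 ≠ i + 1 := fun h => hj (add_right_cancel h)
      simp [hj, hj', hji, this, z.vert_len]
  apex_mem_reach j := by
    split_ifs with hj hj'
    · subst hj
      rwa [valley_length]
    · subst hj'
      rwa [valley_length]
    · exact z.apex_mem_reach j
  eq_of_mem_reach j := by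
    split_ifs with hj hj'
    · subst hj
      rw [valley_length_add]
      exact hv
    · subst hj'
      rw [valley_length_add]
      exact z.eq_of_mem_reach _
    · exact z.eq_of_mem_reach j

lemma length_update (hk : 3 ≤ k) (i : Fin k) {t t' v : V} (A : DirWalk O t (z.vert i 0))
    (B : DirWalk O t v) (C : DirWalk O t' v)
    (E : DirWalk O t' (z.vert (i + 1) (z.len (i + 1))))
    (ht : t ∈ O.reach (s i)) (ht' : t' ∈ O.reach (s (i + 1)))
    (hv : ∀ y ∈ S', v ∈ O.reach y → y = s i ∨ y = s (i + 1)) :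
    (z.update hk i A B C E ht ht' hv).length + (z.len i + z.len (i + 1)) =
      z.length + (A.length + B.length + (C.length + E.length)) := by
  have h1 := Fin.add_one_ne_self (by omega) i
  have hmem : i + 1 ∈ Finset.univ.erase i := by simp [h1]
  have split (F : Fin k → ℕ) :
      ∑ j, F j = ∑ j ∈ (Finset.univ.erase i).erase (i + 1), F j + F (i + 1) + F i := by
    rw [Finset.sum_erase_add _ _ hmem, Finset.sum_erase_add _ _ (Finset.mem_univ i)]
  have hrest : ∑ j ∈ (Finset.univ.erase i).erase (i + 1), (z.update hk i A B C E ht ht' hv).len j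
      = ∑ j ∈ (Finset.univ.erase i).erase (i + 1), z.len j := by
    refine Finset.sum_congr rfl fun j hj => ?_
    simp only [Finset.mem_erase] at hj
    simp [update, hj.1, hj.2.1]
  simp only [length]
  rw [split, split z.len, hrest]
  simp only [update, h1, ↓reduceIte]
  omega

def IsMinimal : Prop := ∀ z' : Zigzag O S' s, z.length ≤ z'.length

end Basic

lemma exists_isMinimal [Nonempty (Zigzag O S' s)] : ∃ z : Zigzag O S' s, z.IsMinimal :=
  ⟨Function.argmin length, fun z' => Function.argmin_le length z'⟩

lemma nonempty_of_urGraph_adj (hadj : ∀ i, (URGraph O S').Adj (s i) (s (i + 1))) :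
    Nonempty (Zigzag O S' s) := by
  choose w hw using fun i => (hadj i).2.2.2
  have hA (i : Fin k) : Nonempty (DirWalk O (s i) (w (i - 1))) :=
    nonempty_of_mem_reach (by simpa using (hw (i - 1)).1.2)
  have hB (i : Fin k) : Nonempty (DirWalk O (s i) (w i)) := nonempty_of_mem_reach (hw i).1.1
  let A i := (hA i).some
  let B i := (hB i).some
  exact ⟨{
    len i := (A i).length + (B i).length
    peak i := (A i).length
    vert i := (A i).valley (B i)
    peak_le_len i := Nat.le_add_right _ _
    rel_of_lt_peak i _ := (A i).rel_valley_of_lt (B i)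
    rel_of_peak_le i _ := (A i).rel_valley_of_le (B i)
    vert_len i := by rw [valley_length_add, valley_zero, add_sub_cancel_right]
    apex_mem_reach i := by rw [valley_length]; exact Relation.ReflTransGen.refl
    eq_of_mem_reach i y hy hr := by
      rw [valley_length_add] at hr
      by_contra hne
      push Not at hne
      exact (hw i).2 (Set.mem_biUnion ⟨hy, by simp [hne.1, hne.2]⟩ hr) }⟩

section Indices

variable {z : Zigzag O S' s} (hs : Function.Injective s) (hS : ∀ i, s i ∈ S')
include hs hS

lemma index_eq_of_mem_reach_vert_len {i j : Fin k} {u : V} (hu : u ∈ O.reach (s j))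
    (h : z.vert i (z.len i) ∈ O.reach u) : j = i ∨ j = i + 1 := by
  simpa [hs.eq_iff] using z.eq_of_mem_reach i _ (hS j) (reach_trans hu h)

lemma index_eq_of_mem_reach_vert_zero {i j : Fin k} {u : V} (hu : u ∈ O.reach (s j))
    (h : z.vert i 0 ∈ O.reach u) : j = i - 1 ∨ j = i := by
  simpa [hs.eq_iff] using z.eq_of_mem_reach_vert_zero i _ (hS j) (reach_trans hu h)

lemma index_eq_of_vert_mem_reach {i j : Fin k} {a : ℕ} (ha : a ≤ z.len i)
    (h : z.vert i a ∈ O.reach (s j)) : j = i - 1 ∨ j = i ∨ j = i + 1 := by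
  rcases le_total a (z.peak i) with h' | h'
  · rcases index_eq_of_mem_reach_vert_zero hs hS h (z.walkAsc i (Nat.zero_le a) h').mem_reach
      with rfl | rfl <;> simp
  · rcases index_eq_of_mem_reach_vert_len hs hS h (z.walkDesc i h' ha le_rfl).mem_reach
      with rfl | rfl <;> simp

lemma index_eq_of_vert_mem_reach_vert {i j : Fin k} {a c : ℕ} (ha : a ≤ z.len i)
    (hc : c ≤ z.len j) (h : z.vert j c ∈ O.reach (z.vert i a)) :
    j = i - 1 ∨ j = i ∨ j = i + 1 := by
  rcases index_eq_of_vert_mem_reach hs hS hc (reach_trans (z.vert_mem_reach i ha) h)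
    with rfl | rfl | rfl <;> simp

variable (hk : 3 ≤ k)
include hk

lemma peak_pos (i : Fin k) : 0 < z.peak i := by
  by_contra h0
  have hdesc := z.walkDesc i (a := 0) (by omega) (Nat.zero_le _) le_rfl
  have hprev : z.vert i 0 ∈ O.reach (s (i - 1)) := by
    simpa [z.vert_len] using z.vert_mem_reach (i - 1) le_rfl
  rcases index_eq_of_mem_reach_vert_len hs hS hprev hdesc.mem_reach with h | h
  · exact Fin.sub_one_ne_self (by omega) i h
  · exact Fin.sub_one_ne_add_one hk i h

lemma peak_lt_len (i : Fin k) : z.peak i < z.len i := by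
  by_contra hl
  have hasc := z.walkAsc i (Nat.zero_le (z.len i)) (by omega)
  have hnext : z.vert i (z.len i) ∈ O.reach (s (i + 1)) := by
    simpa [z.vert_len] using z.vert_mem_reach (i + 1) (Nat.zero_le _)
  rcases index_eq_of_mem_reach_vert_zero hs hS hnext hasc.mem_reach with h | h
  · exact Fin.sub_one_ne_add_one hk i h.symm
  · exact Fin.add_one_ne_self (by omega) i h

lemma len_pos (i : Fin k) : 0 < z.len i :=
  (peak_pos (z := z) hs hS hk i).trans (peak_lt_len hs hS hk i)

lemma two_mul_le_length : 2 * k ≤ z.length := by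
  calc 2 * k = ∑ _i : Fin k, 2 := by simp [mul_comm]
    _ ≤ ∑ i, z.len i := Finset.sum_le_sum fun i _ => by
      have := peak_pos (z := z) hs hS hk i
      have := peak_lt_len (z := z) hs hS hk i
      omega
    _ = z.length := rfl

end Indices

section Minimal

variable {z : Zigzag O S' s} (hs : Function.Injective s) (hS : ∀ i, s i ∈ S') (hk : 3 ≤ k)
  (hz : z.IsMinimal)
include hk hz

lemma IsMinimal.len_add_len_le (i : Fin k) {t t' v : V} (A : DirWalk O t (z.vert i 0))
    (B : DirWalk O t v) (C : DirWalk O t' v)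
    (E : DirWalk O t' (z.vert (i + 1) (z.len (i + 1))))
    (ht : t ∈ O.reach (s i)) (ht' : t' ∈ O.reach (s (i + 1)))
    (hv : ∀ y ∈ S', v ∈ O.reach y → y = s i ∨ y = s (i + 1)) :
    z.len i + z.len (i + 1) ≤ A.length + B.length + (C.length + E.length) := by
  have := z.length_update hk i A B C E ht ht' hv
  have := hz (z.update hk i A B C E ht ht' hv)
  omega

lemma IsMinimal.len_le (i : Fin k) {t : V} (A : DirWalk O t (z.vert i 0))
    (B : DirWalk O t (z.vert i (z.len i))) (ht : t ∈ O.reach (s i)) :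
    z.len i ≤ A.length + B.length := by
  have hp := z.peak_le_len (i + 1)
  have := hz.len_add_len_le hk i A B
    ((z.walkAsc (i + 1) (Nat.zero_le _) le_rfl).cast rfl (z.vert_len i).symm)
    (z.walkDesc (i + 1) le_rfl hp le_rfl) ht (z.apex_mem_reach _) (z.eq_of_mem_reach i)
  simp only [length_cast, length_walkAsc, length_walkDesc] at this
  omega

lemma IsMinimal.sub_le_length_of_dirWalk (i : Fin k) {a c : ℕ} (hac : a ≤ c)
    (hc : c ≤ z.len i) (W : DirWalk O (z.vert i a) (z.vert i c)) : c - a ≤ W.length := by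
  rcases le_or_gt c (z.peak i) with hcp | hcp
  · have := ((z.walkAsc i hac hcp).append W).length_eq_zero_of_eq
    simp only [length_append, length_walkAsc] at this
    omega
  · obtain ⟨t, ht, A, B, hAB⟩ := z.exists_walks_prefix i (hac.trans hc)
    have := hz.len_le hk i A ((B.append W).append (z.walkDesc i hcp.le hc le_rfl)) ht
    simp only [length_append, length_walkDesc] at this
    omega

lemma IsMinimal.sub_le_length_of_dirWalk' (i : Fin k) {a c : ℕ} (hac : a ≤ c)
    (hc : c ≤ z.len i) (W : DirWalk O (z.vert i c) (z.vert i a)) : c - a ≤ W.length := by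
  rcases le_or_gt (z.peak i) a with hap | hap
  · have := (W.append (z.walkDesc i hap hac hc)).length_eq_zero_of_eq
    simp only [length_append, length_walkDesc] at this
    omega
  · obtain ⟨t, ht, C, E, hCE⟩ := z.exists_walks_suffix i hc
    have := hz.len_le hk i ((C.append W).append (z.walkAsc i (Nat.zero_le a) hap.le)) E ht
    simp only [length_append, length_walkAsc] at this
    omega

include hs hS

lemma IsMinimal.le_length_of_dirWalk_succ (i : Fin k) {a c : ℕ} (ha : a ≤ z.len i)
    (hc : c ≤ z.len (i + 1)) (W : DirWalk O (z.vert i a) (z.vert (i + 1) c)) :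
    z.len i - a + c ≤ W.length := by
  rcases le_or_gt (z.peak (i + 1)) c with hcp | hcp
  · exfalso
    rcases index_eq_of_mem_reach_vert_len hs hS
        (reach_trans (z.vert_mem_reach i ha) W.mem_reach)
        (z.walkDesc (i + 1) hcp hc le_rfl).mem_reach with h | h
    · exact Fin.add_one_ne_self (by omega) i h.symm
    · exact Fin.add_one_add_one_ne_self hk i h.symm
  · obtain ⟨t, ht, A, B, hAB⟩ := z.exists_walks_prefix i ha
    obtain ⟨t', ht', C, E, hCE⟩ := z.exists_walks_suffix (i + 1) hc
    have hv : ∀ y ∈ S', z.vert (i + 1) c ∈ O.reach y → y = s i ∨ y = s (i + 1) := by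
      intro y hy hr
      refine z.eq_of_mem_reach i y hy ?_
      rw [z.vert_len]
      exact reach_trans hr (z.walkAsc (i + 1) (Nat.zero_le c) hcp.le).mem_reach
    have := hz.len_add_len_le hk i A (B.append W) C E ht ht' hv
    simp only [length_append] at this
    omega

lemma IsMinimal.le_length_of_dirWalk_succ' (i : Fin k) {a c : ℕ} (ha : a ≤ z.len i)
    (hc : c ≤ z.len (i + 1)) (W : DirWalk O (z.vert (i + 1) c) (z.vert i a)) :
    z.len i - a + c ≤ W.length := by
  rcases le_or_gt a (z.peak i) with hap | hap
  · exfalso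
    rcases index_eq_of_mem_reach_vert_zero hs hS
        (reach_trans (z.vert_mem_reach (i + 1) hc) W.mem_reach)
        (z.walkAsc i (Nat.zero_le a) hap).mem_reach with h | h
    · exact Fin.sub_one_ne_add_one hk i h.symm
    · exact Fin.add_one_ne_self (by omega) i h
  · obtain ⟨t, ht, A, B, hAB⟩ := z.exists_walks_prefix i ha
    obtain ⟨t', ht', C, E, hCE⟩ := z.exists_walks_suffix (i + 1) hc
    have hv : ∀ y ∈ S', z.vert i a ∈ O.reach y → y = s i ∨ y = s (i + 1) := fun y hy hr =>
      z.eq_of_mem_reach i y hy (reach_trans hr (z.walkDesc i hap.le ha le_rfl).mem_reach)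
    have := hz.len_add_len_le hk i A B (C.append W) E ht ht' hv
    simp only [length_append] at this
    omega

lemma IsMinimal.injective_vert :
    Function.Injective fun p : (i : Fin k) × Fin (z.len i) => z.vert p.1 p.2 := by
  rintro ⟨i, a⟩ ⟨j, c⟩ (heq : z.vert i a = z.vert j c)
  obtain ⟨W, hW⟩ : ∃ W : DirWalk O (z.vert i a) (z.vert j c), W.length = 0 :=
    ⟨(nil _).cast rfl heq, rfl⟩
  rcases index_eq_of_vert_mem_reach_vert hs hS a.2.le c.2.le W.mem_reach with h | rfl | rfl
  · obtain rfl : i = j + 1 := by rw [h, sub_add_cancel]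
    have := hz.le_length_of_dirWalk_succ' hs hS hk j c.2.le a.2.le W
    omega
  · rcases le_total a c with hac | hac
    · have := hz.sub_le_length_of_dirWalk hk j hac c.2.le W
      simp only [Sigma.mk.injEq, heq_eq_eq, Fin.ext_iff, true_and]
      omega
    · have := hz.sub_le_length_of_dirWalk' hk j hac a.2.le W
      simp only [Sigma.mk.injEq, heq_eq_eq, Fin.ext_iff, true_and]
      omega
  · have := hz.le_length_of_dirWalk_succ hs hS hk i a.2.le c.2.le W
    omega

lemma IsMinimal.eq_finSigmaSucc_of_rel {p q : (i : Fin k) × Fin (z.len i)}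
    (h : O.D (z.vert p.1 p.2) (z.vert q.1 q.2)) :
    q = finSigmaSucc (len_pos hs hS hk) p ∨ p = finSigmaSucc (len_pos hs hS hk) q := by
  obtain ⟨i, a⟩ := p
  obtain ⟨j, c⟩ := q
  obtain ⟨W, hW⟩ : ∃ W : DirWalk O (z.vert i a) (z.vert j c), W.length = 1 := ⟨single h, rfl⟩
  rcases index_eq_of_vert_mem_reach_vert hs hS a.2.le c.2.le W.mem_reach with hj | rfl | rfl
  · obtain rfl : i = j + 1 := by rw [hj, sub_add_cancel]
    have := hz.le_length_of_dirWalk_succ' hs hS hk j c.2.le a.2.le W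
    right
    rw [finSigmaSucc_of_add_one_eq _ (by omega)]
    simp only [Sigma.mk.injEq, heq_eq_eq, Fin.ext_iff, true_and]
    omega
  · have hac : a ≠ c := by
      rintro rfl
      exact O.acyclic _ (Relation.TransGen.single h)
    rcases lt_or_gt_of_ne (Fin.val_ne_of_ne hac) with hlt | hlt
    · have := hz.sub_le_length_of_dirWalk hk j hlt.le c.2.le W
      left
      rw [finSigmaSucc_of_lt _ (by omega)]
      simp only [Sigma.mk.injEq, heq_eq_eq, Fin.ext_iff, true_and]
      omega
    · have := hz.sub_le_length_of_dirWalk' hk j hlt.le a.2.le W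
      right
      rw [finSigmaSucc_of_lt _ (by omega)]
      simp only [Sigma.mk.injEq, heq_eq_eq, Fin.ext_iff, true_and]
      omega
  · have := hz.le_length_of_dirWalk_succ hs hS hk i a.2.le c.2.le W
    left
    rw [finSigmaSucc_of_add_one_eq _ (by omega)]
    simp only [Sigma.mk.injEq, heq_eq_eq, Fin.ext_iff, true_and]
    omega

lemma IsMinimal.adj_vert_iff (p q : (i : Fin k) × Fin (z.len i)) :
    H.Adj (z.vert p.1 p.2) (z.vert q.1 q.2) ↔
      q = finSigmaSucc (len_pos hs hS hk) p ∨ p = finSigmaSucc (len_pos hs hS hk) q := by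
  constructor
  · intro h
    rcases O.rel_of_adj _ _ h with h | h
    · exact hz.eq_finSigmaSucc_of_rel hs hS hk h
    · exact (hz.eq_finSigmaSucc_of_rel hs hS hk h).symm
  · rintro (rfl | rfl)
    · exact z.adj_vert_finSigmaSucc _ p
    · exact (z.adj_vert_finSigmaSucc _ q).symm

theorem IsMinimal.hasInducedCycleOfLength : HasInducedCycleOfLength H z.length := by
  have hn := len_pos (z := z) hs hS hk
  have hlen := two_mul_le_length (z := z) hs hS hk
  set g : (i : Fin k) × Fin (z.len i) → V := fun p => z.vert p.1 p.2
  refine hasInducedCycleOfLength_of_adj_iff (N := ∑ i, z.len i) (by unfold length at hlen; omega)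
    (g ∘ finSigmaFinEquiv.symm) ((hz.injective_vert hs hS hk).comp finSigmaFinEquiv.symm.injective)
    fun u v => ?_
  obtain ⟨p, rfl⟩ := finSigmaFinEquiv.surjective u
  obtain ⟨q, rfl⟩ := finSigmaFinEquiv.surjective v
  rw [Function.comp_apply, Function.comp_apply, Equiv.symm_apply_apply, Equiv.symm_apply_apply,
    hz.adj_vert_iff hs hS hk, ← finSigmaFinEquiv_finSigmaSucc hn,
    ← finSigmaFinEquiv_finSigmaSucc hn, ← Fin.ext_iff, ← Fin.ext_iff,
    finSigmaFinEquiv.apply_eq_iff_eq, finSigmaFinEquiv.apply_eq_iff_eq]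

end Minimal

end Zigzag

end GraphOrientation

open GraphOrientation in
theorem exists_hasInducedCycleOfLength_of_urGraph_cycle {V : Type} {H : SimpleGraph V}
    {O : GraphOrientation H} {S' : Set V} {k : ℕ} [NeZero k] (hk : 3 ≤ k) {s : Fin k → V}
    (hs : Function.Injective s) (hadj : ∀ i, (URGraph O S').Adj (s i) (s (i + 1))) :
    ∃ n, 2 * k ≤ n ∧ HasInducedCycleOfLength H n := by
  have hS i : s i ∈ S' := (hadj i).1
  have := Zigzag.nonempty_of_urGraph_adj hadj
  obtain ⟨z, hz⟩ := Zigzag.exists_isMinimal (O := O) (S' := S') (s := s)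
  exact ⟨z.length, Zigzag.two_mul_le_length hs hS hk, hz.hasInducedCycleOfLength hs hS hk⟩

section TreeDecomposition

variable {V : Type} {H : SimpleGraph V} {O : GraphOrientation H} {ι : Type}
  {tree : SimpleGraph ι} {bag : ι → Set V}

lemma IsWidthOnePDTD.exists_bag_eq_singleton {Sp : Set V}
    (hT : IsWidthOnePDTD O Sp tree bag) {c : V} (hc : c ∈ Sp) : ∃ i, bag i = {c} := by
  obtain ⟨⟨-, -, -, hunion, -⟩, -, hsingle⟩ := hT
  rw [← hunion, Set.mem_iUnion] at hc
  obtain ⟨i, hi⟩ := hc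
  obtain ⟨σ, hσ⟩ := hsingle i
  rw [hσ, Set.mem_singleton_iff] at hi
  exact ⟨i, hi ▸ hσ⟩

lemma urGraph_adj_of_leaf {S' : Set V} {x : V} (hx : x ∈ S')
    (hT : IsWidthOnePDTD O (S' \ {x}) tree bag) {i j : ι} {l d : V}
    (hij : tree.neighborSet i = {j}) (hl : bag i = {l}) (hd : bag j = {d})
    (hcov : ¬ O.reach x ∩ O.reach l ⊆ O.reach d) : (URGraph O S').Adj x l := by
  classical
  have ⟨⟨_, htree, hsub, _, hpath⟩, _, _⟩ := hT
  obtain ⟨v, hv, hvd⟩ := Set.not_subset.mp hcov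
  have hlS : l ∈ S' \ {x} := hsub i (by simp [hl])
  refine ⟨hx, hlS.1, fun h => hlS.2 h.symm, v, hv, ?_⟩
  simp only [GraphOrientation.reachSet, Set.mem_iUnion, not_exists]
  rintro y ⟨hyS, hyxl⟩ hvy
  simp only [Set.mem_insert_iff, Set.mem_singleton_iff, not_or] at hyxl
  obtain ⟨n, hn⟩ := hT.exists_bag_eq_singleton ⟨hyS, hyxl.1⟩
  have hin : i ≠ n := by
    rintro rfl
    exact hyxl.2 (Set.singleton_eq_singleton_iff.mp (hl ▸ hn)).symm
  obtain ⟨p, hp⟩ := (htree.connected.preconnected i n).some.toPath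
  have := hpath i j n p hp (p.mem_support_of_neighborSet_eq_singleton hij hin)
    (show v ∈ _ ∩ _ by simp [hl, hn, O.reachSet_singleton_s9, hv.2, hvy])
  rw [hd, O.reachSet_singleton_s9] at this
  exact hvd this

lemma exists_ne_urGraph_adj_of_not_goodPair {S' : Set V} {x : V} (hx : x ∈ S')
    (h3 : 3 ≤ S'.ncard) (hT : IsWidthOnePDTD O (S' \ {x}) tree bag)
    (hbad : ¬ GoodPair O tree bag x) :
    ∃ l₁ l₂, l₁ ≠ l₂ ∧ (URGraph O S').Adj x l₁ ∧ (URGraph O S').Adj x l₂ := by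
  classical
  have ⟨⟨hfin, htree, _, _, _⟩, hinj, hsingle⟩ := hT
  have : Fintype ι := Fintype.ofFinite ι
  have hS'x : 1 < (S' \ {x}).ncard := by
    rw [Set.ncard_sdiff_singleton_of_mem hx]
    omega
  obtain ⟨a, ha, b, hb, hab⟩ := (Set.one_lt_ncard (Set.finite_of_ncard_pos (by omega))).mp hS'x
  obtain ⟨na, hna⟩ := hT.exists_bag_eq_singleton ha
  obtain ⟨nb, hnb⟩ := hT.exists_bag_eq_singleton hb
  have : Nontrivial ι := ⟨na, nb, fun h => hab (by simpa [h, hnb] using hna.symm)⟩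
  obtain ⟨u, v, huv, hu, hv⟩ := htree.exists_ne_and_degree_eq_one
  have leaf {w : ι} (hw : tree.degree w = 1) : ∃ l, bag w = {l} ∧ (URGraph O S').Adj x l := by
    obtain ⟨w', hw', huniq⟩ := SimpleGraph.degree_eq_one_iff_existsUnique_adj.mp hw
    have hnbr : tree.neighborSet w = {w'} := Set.ext fun y => ⟨huniq y, fun h => h ▸ hw'⟩
    obtain ⟨l, hl⟩ := hsingle w
    obtain ⟨d, hd⟩ := hsingle w'
    exact ⟨l, hl, urGraph_adj_of_leaf hx hT hnbr hl hd fun h => hbad ⟨w, w', l, d, hnbr, hl, hd, h⟩⟩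
  obtain ⟨l₁, hl₁, h₁⟩ := leaf hu
  obtain ⟨l₂, hl₂, h₂⟩ := leaf hv
  exact ⟨l₁, l₂, fun h => huv (hinj (by rw [hl₁, hl₂, h])), h₁, h₂⟩

end TreeDecomposition

theorem exists_goodPair_of_licl_le_five_general {V : Type} [Fintype V] (H : SimpleGraph V)
    (hlicl : ∀ n : ℕ, 6 ≤ n → ¬ HasInducedCycleOfLength H n)
    (O : GraphOrientation H) (S' : Set V) (h3 : 3 ≤ S'.ncard)
    (ι : V → Type) (tree : ∀ x, SimpleGraph (ι x)) (bag : ∀ x, ι x → Set V)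
    (hT : ∀ x ∈ S', IsWidthOnePDTD O (S' \ {x}) (tree x) (bag x)) :
    ∃ x ∈ S', GoodPair O (tree x) (bag x) x := by
  by_contra hbad
  push Not at hbad
  have hdeg x (hx : x ∈ S') := exists_ne_urGraph_adj_of_not_goodPair hx h3 (hT x hx) (hbad x hx)
  obtain ⟨x, hx⟩ : S'.Nonempty := Set.nonempty_of_ncard_ne_zero (by omega)
  obtain ⟨l, -, -, hl, -⟩ := hdeg x hx
  obtain ⟨k, s, hs, hadj⟩ := SimpleGraph.exists_cycle_of_forall_adj hl fun u v huv => by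
    obtain ⟨l₁, l₂, hne, h₁, h₂⟩ := hdeg v huv.2.1
    by_cases h : l₁ = u
    · exact ⟨l₂, h₂, h ▸ hne.symm⟩
    · exact ⟨l₁, h₁, h⟩
  obtain ⟨n, hn, hcyc⟩ := exists_hasInducedCycleOfLength_of_urGraph_cycle (by omega) hs hadj
  exact hlicl n (by omega) hcyc

/-- Suppose the longest induced cycle of `H` has length at most 5.
Let `S'` be a set of sources of an acyclic orientation of `H` with `|S'| ≥ 3`, and
for each `x ∈ S'` let `(tree x, bag x)` be a width-one partial DAG tree
decomposition with respect to `S' ∖ {x}`.  Then there is some `x ∈ S'` for which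
`(x, (tree x, bag x))` is a good pair. -/
theorem exists_goodPair_of_licl_le_five {V : Type} [Fintype V] (H : SimpleGraph V)
    (hlicl : ∀ n : ℕ, 6 ≤ n → ¬ HasInducedCycleOfLength H n)
    (O : GraphOrientation H) (S' : Set V) (hS' : S' ⊆ O.sources) (h3 : 3 ≤ S'.ncard)
    (ι : V → Type) (tree : ∀ x, SimpleGraph (ι x)) (bag : ∀ x, ι x → Set V)
    (hT : ∀ x ∈ S', IsWidthOnePDTD O (S' \ {x}) (tree x) (bag x)) :
    ∃ x ∈ S', GoodPair O (tree x) (bag x) x :=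
  exists_goodPair_of_licl_le_five_general H hlicl O S' h3 ι tree bag hT
end

section
/- Let H be a simple graph containing an induced cycle of length r, where r ≥ 6. Then there exists an acyclic orientation H→ of H, with source set S, such that the unique reachability graph UR_S contains a triangle (three pairwise adjacent vertices). -/
namespace GraphOrientation

variable {V : Type} {H : SimpleGraph V}

def ofRank {α : Type} [LinearOrder α] (f : V → α) (hf : ∀ u v, H.Adj u v → f u ≠ f v) :
    GraphOrientation H where
  D u v := H.Adj u v ∧ f u < f v
  adj_of_rel _ _ h := h.1
  rel_of_adj u v h := (hf u v h).lt_or_gt.imp (⟨h, ·⟩) (⟨h.symm, ·⟩)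
  acyclic v h := by
    suffices ∀ {a b}, Relation.TransGen (fun u v => H.Adj u v ∧ f u < f v) a b → f a < f b
      from (this h).false
    intro a b hab
    induction hab with
    | single h => exact h.2
    | tail _ h ih => exact ih.trans h.2

variable (O : GraphOrientation H) {s v : V}

theorem eq_of_mem_reach_of_mem_sources (hv : v ∈ O.sources) (h : v ∈ O.reach s) : s = v := by
  rcases Relation.ReflTransGen.cases_tail h with rfl | ⟨u, -, hu⟩
  · rfl
  · exact (hv u hu).elim

theorem exists_D_mem_reach (hs : s ∈ O.sources) (hv : v ∉ O.sources) (h : v ∈ O.reach s) :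
    ∃ u, O.D u v ∧ u ∈ O.reach s := by
  rcases Relation.ReflTransGen.cases_tail h with rfl | ⟨u, hu, huv⟩
  · exact (hv hs).elim
  · exact ⟨u, huv, hu⟩

end GraphOrientation

theorem URGraph.adj_of_forall_mem_reach {V : Type} {H : SimpleGraph V} {O : GraphOrientation H}
    {Sp : Set V} {s₁ s₂ v : V} (h₁ : s₁ ∈ Sp) (h₂ : s₂ ∈ Sp) (hne : s₁ ≠ s₂)
    (hv₁ : v ∈ O.reach s₁) (hv₂ : v ∈ O.reach s₂)
    (huniq : ∀ s ∈ Sp, v ∈ O.reach s → s = s₁ ∨ s = s₂) :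
    (URGraph O Sp).Adj s₁ s₂ := by
  refine ⟨h₁, h₂, hne, v, ⟨hv₁, hv₂⟩, ?_⟩
  simp only [GraphOrientation.reachSet, Set.mem_iUnion]
  rintro ⟨s, ⟨hs, hs₁₂⟩, hv⟩
  exact hs₁₂ (huniq s hs hv)

open SimpleGraph

theorem SimpleGraph.cycleGraph_adj_iff_val {n : ℕ} (hn : 2 ≤ n) {u v : Fin n} :
    (cycleGraph n).Adj u v ↔ u.val + 1 = v.val ∨ v.val + 1 = u.val ∨
      (u.val = 0 ∧ v.val + 1 = n) ∨ (v.val = 0 ∧ u.val + 1 = n) := by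
  obtain ⟨n, rfl⟩ := Nat.exists_eq_add_of_le' hn
  rw [cycleGraph_adj', Fin.sub_def, Fin.sub_def]
  have sub_val_eq_one : ∀ a b : ℕ, a < n + 2 → b < n + 2 →
      ((n + 2 - b + a) % (n + 2) = 1 ↔ a = b + 1 ∨ (a = 0 ∧ b = n + 1)) := by
    intro a b ha hb
    rcases Nat.lt_or_ge (n + 2 - b + a) (n + 2) with h | h
    · rw [Nat.mod_eq_of_lt h]; omega
    · rw [Nat.mod_eq_sub_mod h, Nat.mod_eq_of_lt (by omega)]; omega
  rw [sub_val_eq_one _ _ u.isLt v.isLt, sub_val_eq_one _ _ v.isLt u.isLt]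
  omega

def cycleRank (k : ℕ) : ℕ := if k < 5 then k % 2 else k - 4

theorem cycleRank_around_odd {m : ℕ} (hm : m = 1 ∨ m = 3) :
    cycleRank (m - 1) = 0 ∧ cycleRank m = 1 ∧ cycleRank (m + 1) = 0 := by
  rcases hm with rfl | rfl <;> decide

theorem cycleRank_lt_succ {k : ℕ} (hk : 4 ≤ k) : cycleRank k < cycleRank (k + 1) := by
  simp only [cycleRank]
  split_ifs <;> omega

theorem cycleRank_ne_of_adj {r : ℕ} (hr : 6 ≤ r) {i j : Fin r} (h : (cycleGraph r).Adj i j) :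
    cycleRank i ≠ cycleRank j := by
  rw [cycleGraph_adj_iff_val (by omega)] at h
  unfold cycleRank
  split_ifs <;> omega

section CycleOrientation

open GraphOrientation

variable {V : Type} {H : SimpleGraph V} {r : ℕ} (e : cycleGraph r ↪g H)

noncomputable def cycleKey : V → Lex (ℕ ⊕ V) :=
  Function.extend e (fun i => toLex (.inl (cycleRank i))) (fun v => toLex (.inr v))

theorem cycleKey_apply (i : Fin r) : cycleKey e (e i) = toLex (.inl (cycleRank i)) :=
  e.injective.extend_apply _ _ i

theorem cycleKey_of_notMem_range {v : V} (hv : v ∉ Set.range e) :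
    cycleKey e v = toLex (.inr v) :=
  Function.extend_apply' _ _ v hv

theorem cycleKey_ne_of_adj (hr : 6 ≤ r) {u v : V} (h : H.Adj u v) :
    cycleKey e u ≠ cycleKey e v := by
  by_cases hu : u ∈ Set.range e <;> by_cases hv : v ∈ Set.range e
  · obtain ⟨i, rfl⟩ := hu
    obtain ⟨j, rfl⟩ := hv
    simpa [cycleKey_apply] using cycleRank_ne_of_adj hr (e.map_adj_iff.mp h)
  · obtain ⟨i, rfl⟩ := hu
    simp [cycleKey_apply, cycleKey_of_notMem_range e hv]
  · obtain ⟨j, rfl⟩ := hv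
    simp [cycleKey_apply, cycleKey_of_notMem_range e hu]
  · simpa [cycleKey_of_notMem_range e hu, cycleKey_of_notMem_range e hv] using h.ne

variable [LinearOrder V] (hr : 6 ≤ r)

noncomputable def cycleOrientation : GraphOrientation H :=
  ofRank (cycleKey e) fun _ _ => cycleKey_ne_of_adj e hr

theorem cycleOrientation_D_apply_iff {u : V} {j : Fin r} :
    (cycleOrientation e hr).D u (e j) ↔
      ∃ i, e i = u ∧ (cycleGraph r).Adj i j ∧ cycleRank i < cycleRank j := by
  constructor
  · rintro ⟨hadj, hlt⟩
    by_cases hu : u ∈ Set.range e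
    · obtain ⟨i, rfl⟩ := hu
      rw [cycleKey_apply, cycleKey_apply, Sum.Lex.inl_lt_inl_iff] at hlt
      exact ⟨i, rfl, e.map_adj_iff.mp hadj, hlt⟩
    · rw [cycleKey_apply, cycleKey_of_notMem_range e hu] at hlt
      exact (Sum.Lex.not_inr_lt_inl hlt).elim
  · rintro ⟨i, rfl, hadj, hlt⟩
    refine ⟨e.map_adj_iff.mpr hadj, ?_⟩
    rwa [cycleKey_apply, cycleKey_apply, Sum.Lex.inl_lt_inl_iff]

theorem cycleOrientation_mem_sources {j : Fin r} (hj : cycleRank j = 0) :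
    e j ∈ (cycleOrientation e hr).sources := by
  intro u hu
  obtain ⟨i, -, -, hlt⟩ := (cycleOrientation_D_apply_iff e hr).mp hu
  omega

theorem cycleOrientation_D_mk {i j : ℕ} (hi : i < r) (hj : j < r)
    (hadj : i + 1 = j ∨ j + 1 = i ∨ (i = 0 ∧ j + 1 = r)) (hlt : cycleRank i < cycleRank j) :
    (cycleOrientation e hr).D (e ⟨i, hi⟩) (e ⟨j, hj⟩) :=
  (cycleOrientation_D_apply_iff e hr).mpr
    ⟨_, rfl, (cycleGraph_adj_iff_val (by omega)).mpr (by dsimp only; omega), hlt⟩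

theorem cycleOrientation_eq_of_mem_reach_odd {m : ℕ} (hm : m = 1 ∨ m = 3) {s : V}
    (hs : s ∈ (cycleOrientation e hr).sources)
    (h : e ⟨m, by omega⟩ ∈ (cycleOrientation e hr).reach s) :
    s = e ⟨m - 1, by omega⟩ ∨ s = e ⟨m + 1, by omega⟩ := by
  have hD : (cycleOrientation e hr).D (e ⟨m - 1, by omega⟩) (e ⟨m, by omega⟩) :=
    cycleOrientation_D_mk e hr _ _ (by omega) (by have := cycleRank_around_odd hm; omega)
  obtain ⟨u, hu, hsu⟩ := exists_D_mem_reach _ hs (fun hsrc => hsrc _ hD) h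
  obtain ⟨i, rfl, hadj, hlt⟩ := (cycleOrientation_D_apply_iff e hr).mp hu
  simp only [cycleGraph_adj_iff_val (by omega : 2 ≤ r)] at hadj hlt
  have hi : cycleRank i = 0 := by have := cycleRank_around_odd hm; omega
  rw [eq_of_mem_reach_of_mem_sources _ (cycleOrientation_mem_sources e hr hi) hsu]
  simp only [EmbeddingLike.apply_eq_iff_eq, Fin.ext_iff]
  omega

theorem cycleOrientation_eq_of_mem_reach_tail {s : V}
    (hs : s ∈ (cycleOrientation e hr).sources) :
    ∀ k, 4 ≤ k → ∀ hk : k < r, e ⟨k, hk⟩ ∈ (cycleOrientation e hr).reach s →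
      s = e ⟨0, by omega⟩ ∨ s = e ⟨4, by omega⟩ := by
  intro k hk4
  induction k, hk4 using Nat.le_induction with
  | base =>
    intro _ h
    exact .inr (eq_of_mem_reach_of_mem_sources _
      (cycleOrientation_mem_sources e hr (by simp [cycleRank])) h)
  | succ k hk4 ih =>
    intro hk h
    have hD : (cycleOrientation e hr).D (e ⟨k, by omega⟩) (e ⟨k + 1, hk⟩) :=
      cycleOrientation_D_mk e hr _ _ (by omega) (cycleRank_lt_succ hk4)
    obtain ⟨u, hu, hsu⟩ := exists_D_mem_reach _ hs (fun hsrc => hsrc _ hD) h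
    obtain ⟨i, rfl, hadj, hlt⟩ := (cycleOrientation_D_apply_iff e hr).mp hu
    simp only [cycleGraph_adj_iff_val (by omega : 2 ≤ r), cycleRank] at hadj hlt
    have hi : i.val = 0 ∨ i.val = k := by split_ifs at hlt <;> omega
    rcases hi with hi | hi
    · rw [eq_of_mem_reach_of_mem_sources _
        (cycleOrientation_mem_sources e hr (by simp [cycleRank, hi])) hsu]
      exact .inl (congrArg e (Fin.ext hi))
    · rw [show i = ⟨k, by omega⟩ from Fin.ext hi] at hsu
      exact ih (by omega) hsu

theorem cycleOrientation_mem_reach_tail :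
    ∀ k, 4 ≤ k → ∀ hk : k < r,
      e ⟨k, hk⟩ ∈ (cycleOrientation e hr).reach (e ⟨4, by omega⟩) := by
  intro k hk4
  induction k, hk4 using Nat.le_induction with
  | base => exact fun _ => .refl
  | succ k hk4 ih =>
    intro hk
    exact (ih (by omega)).tail <|
      cycleOrientation_D_mk e hr _ _ (by omega) (cycleRank_lt_succ hk4)

theorem cycleOrientation_urGraph_adj_odd {m : ℕ} (hm : m = 1 ∨ m = 3) :
    (URGraph (cycleOrientation e hr) (cycleOrientation e hr).sources).Adj
      (e ⟨m - 1, by omega⟩) (e ⟨m + 1, by omega⟩) := by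
  refine URGraph.adj_of_forall_mem_reach (v := e ⟨m, by omega⟩)
    (cycleOrientation_mem_sources e hr ?_) (cycleOrientation_mem_sources e hr ?_)
    (e.injective.ne (Fin.ne_of_val_ne (by dsimp only; omega))) (.single ?_) (.single ?_)
    fun s hs h => cycleOrientation_eq_of_mem_reach_odd e hr hm hs h
  all_goals have := cycleRank_around_odd hm
  · exact this.1
  · exact this.2.2
  · exact cycleOrientation_D_mk e hr _ _ (by omega) (by omega)
  · exact cycleOrientation_D_mk e hr _ _ (by omega) (by omega)

theorem cycleOrientation_urGraph_adj_zero_four :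
    (URGraph (cycleOrientation e hr) (cycleOrientation e hr).sources).Adj
      (e ⟨0, by omega⟩) (e ⟨4, by omega⟩) :=
  URGraph.adj_of_forall_mem_reach (v := e ⟨r - 1, by omega⟩)
    (cycleOrientation_mem_sources e hr (by simp [cycleRank]))
    (cycleOrientation_mem_sources e hr (by simp [cycleRank]))
    (e.injective.ne (Fin.ne_of_val_ne (by dsimp only; omega)))
    (.single (cycleOrientation_D_mk e hr _ _
      (by omega) (by simp only [cycleRank]; split_ifs <;> omega)))
    (cycleOrientation_mem_reach_tail e hr _ (by omega) _)
    fun s hs h => cycleOrientation_eq_of_mem_reach_tail e hr hs _ (by omega) _ h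

end CycleOrientation

theorem exists_orientation_urGraph_triangle_general {V : Type} (H : SimpleGraph V)
    (r : ℕ) (hr : 6 ≤ r) (hcyc : HasInducedCycleOfLength H r) :
    ∃ (O : GraphOrientation H) (s₁ s₂ s₃ : V),
      (URGraph O O.sources).Adj s₁ s₂ ∧ (URGraph O O.sources).Adj s₂ s₃ ∧
        (URGraph O O.sources).Adj s₁ s₃ := by
  obtain ⟨_, -⟩ := exists_wellFoundedLT V
  obtain ⟨e⟩ := hcyc
  exact ⟨cycleOrientation e hr, e ⟨0, by omega⟩, e ⟨2, by omega⟩, e ⟨4, by omega⟩,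
    cycleOrientation_urGraph_adj_odd e hr (m := 1) (.inl rfl),
    cycleOrientation_urGraph_adj_odd e hr (m := 3) (.inr rfl),
    cycleOrientation_urGraph_adj_zero_four e hr⟩

/-- If `H` contains an induced cycle of length `r ≥ 6`, then `H`
has an acyclic orientation whose unique reachability graph (over the full source
set) contains a triangle. -/
theorem exists_orientation_urGraph_triangle {V : Type} [Fintype V] (H : SimpleGraph V)
    (r : ℕ) (hr : 6 ≤ r) (hcyc : HasInducedCycleOfLength H r) :
    ∃ (O : GraphOrientation H) (s₁ s₂ s₃ : V),
      (URGraph O O.sources).Adj s₁ s₂ ∧ (URGraph O O.sources).Adj s₂ s₃ ∧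
        (URGraph O O.sources).Adj s₁ s₃ :=
  exists_orientation_urGraph_triangle_general H r hr hcyc
end
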